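/- If A is a good bounded pseudo-hoop, then the set Den(A) = {x ∈ A : x^{-∼} = 1} of dense elements is a normal involutive filter of A. -/

import Mathlib

universe u v

class PseudoHoop (A : Type u) extends One A, Mul A where
  rimp : A → A → A
  limp : A → A → A
  mul_one' : ∀ x : A, x * 1 = x
  one_mul' : ∀ x : A, 1 * x = x
  rimp_self : ∀ x : A, rimp x x = 1
  limp_self : ∀ x : A, limp x x = 1
  mul_rimp : ∀ x y z : A, rimp (x * y) z = rimp x (rimp y z)
  mul_limp : ∀ x y z : A, limp (x * y) z = limp y (limp x z)
  div₁ : ∀ x y : A, (rimp x y) * x = (rimp y x) * y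
  div₂ : ∀ x y : A, (rimp x y) * x = x * (limp x y)
  div₃ : ∀ x y : A, x * (limp x y) = y * (limp y x)

namespace PseudoHoop

/-- The order on a pseudo-hoop: `x ≤ y` iff `x → y = 1`. -/
def ple {A : Type u} [PseudoHoop A] (x y : A) : Prop := rimp x y = 1

/-- The meet `x ∧ y = (x → y) ⊙ x`. -/
def meet {A : Type u} [PseudoHoop A] (x y : A) : A := (rimp x y) * x

/-- `x ∨₁ y = (x → y) ⇝ y`. -/
def join₁ {A : Type u} [PseudoHoop A] (x y : A) : A := limp (rimp x y) y

/-- `x ∨₂ y = (x ⇝ y) → y`. -/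
def join₂ {A : Type u} [PseudoHoop A] (x y : A) : A := rimp (limp x y) y

/-- Iterated implication: `x →⁰ y = y`, `x →ⁿ⁺¹ y = x → (x →ⁿ y)`. -/
def rimpPow {A : Type u} [PseudoHoop A] (x : A) : ℕ → A → A
  | 0, y => y
  | n + 1, y => rimp x (rimpPow x n y)

/-- A filter of a pseudo-hoop. -/
structure IsFilter {A : Type u} [PseudoHoop A] (F : Set A) : Prop where
  nonempty : F.Nonempty
  mul_mem : ∀ {x y : A}, x ∈ F → y ∈ F → x * y ∈ F
  upward : ∀ {x y : A}, x ∈ F → ple x y → y ∈ F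

/-- A normal filter: `x → y ∈ F` iff `x ⇝ y ∈ F`. -/
def IsNormalFilter {A : Type u} [PseudoHoop A] (F : Set A) : Prop :=
  IsFilter F ∧ ∀ x y : A, rimp x y ∈ F ↔ limp x y ∈ F

def IsProper {A : Type u} [PseudoHoop A] (F : Set A) : Prop := F ≠ Set.univ

/-- A pseudo-hoop is simple if `{1}` is its unique proper filter. -/
def IsSimple (A : Type u) [PseudoHoop A] : Prop :=
  ∀ F : Set A, IsFilter F → IsProper F → F = {1}

/-- A pseudo-hoop is Wajsberg if `x ∨₁ y = y ∨₁ x` and `x ∨₂ y = y ∨₂ x`. -/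
def IsWajsberg (A : Type u) [PseudoHoop A] : Prop :=
  ∀ x y : A, join₁ x y = join₁ y x ∧ join₂ x y = join₂ y x

/-- A fantastic filter. -/
def IsFantasticFilter {A : Type u} [PseudoHoop A] (F : Set A) : Prop :=
  IsFilter F ∧ ∀ x y : A,
    (rimp y x ∈ F → rimp (join₁ x y) x ∈ F) ∧
    (limp y x ∈ F → limp (join₂ x y) x ∈ F)

def IS₂ {A : Type u} [PseudoHoop A] (μ : A → A) : Prop :=
  ∀ x y : A, μ (x * y) = μ x * μ (limp x (x * y)) ∧
    μ (x * y) = μ (rimp y (x * y)) * μ y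

def IS₃ {A : Type u} [PseudoHoop A] (μ : A → A) : Prop :=
  ∀ x y : A, μ (μ x * μ y) = μ x * μ y

def IS₄ {A : Type u} [PseudoHoop A] (μ : A → A) : Prop :=
  ∀ x y : A, μ (rimp (μ x) (μ y)) = rimp (μ x) (μ y) ∧
    μ (limp (μ x) (μ y)) = limp (μ x) (μ y)

/-- Type I state operator. -/
def IsStateI {A : Type u} [PseudoHoop A] (μ : A → A) : Prop :=
  (∀ x y : A, μ (rimp x y) = rimp (μ (join₁ x y)) (μ y) ∧
      μ (limp x y) = limp (μ (join₂ x y)) (μ y)) ∧ IS₂ μ ∧ IS₃ μ ∧ IS₄ μ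

/-- Type II state operator. -/
def IsStateII {A : Type u} [PseudoHoop A] (μ : A → A) : Prop :=
  (∀ x y : A, μ (rimp x y) = rimp (μ (join₁ y x)) (μ y) ∧
      μ (limp x y) = limp (μ (join₂ y x)) (μ y)) ∧ IS₂ μ ∧ IS₃ μ ∧ IS₄ μ

/-- Type III state operator. -/
def IsStateIII {A : Type u} [PseudoHoop A] (μ : A → A) : Prop :=
  (∀ x y : A, μ (rimp x y) = rimp (μ x) (μ (meet x y)) ∧
      μ (limp x y) = limp (μ x) (μ (meet x y))) ∧ IS₂ μ ∧ IS₃ μ ∧ IS₄ μ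

end PseudoHoop

open PseudoHoop

/-- A bounded pseudo-hoop: a pseudo-hoop with a least element `0`. -/
class BoundedPseudoHoop (A : Type u) extends PseudoHoop A, Zero A where
  zero_le : ∀ x : A, rimp 0 x = 1

namespace BoundedPseudoHoop

/-- `x⁻ = x → 0`. -/
def negr {A : Type u} [BoundedPseudoHoop A] (x : A) : A := rimp x 0

/-- `x∼ = x ⇝ 0`. -/
def negl {A : Type u} [BoundedPseudoHoop A] (x : A) : A := limp x 0

/-- A bounded pseudo-hoop is good if `x⁻∼ = x∼⁻` for all `x`. -/
def IsGood (A : Type u) [BoundedPseudoHoop A] : Prop :=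
  ∀ x : A, negl (negr x) = negr (negl x)

/-- A bounded pseudo-hoop is involutive if `x⁻∼ = x∼⁻ = x` for all `x`. -/
def IsInvolutive (A : Type u) [BoundedPseudoHoop A] : Prop :=
  ∀ x : A, negl (negr x) = x ∧ negr (negl x) = x

/-- The set of dense elements. -/
def Den (A : Type u) [BoundedPseudoHoop A] : Set A :=
  {x : A | negl (negr x) = 1}

/-- An involutive filter: `x⁻∼ → x ∈ F` and `x∼⁻ ⇝ x ∈ F` for all `x`. -/
def IsInvolutiveFilter {A : Type u} [BoundedPseudoHoop A] (F : Set A) : Prop :=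
  IsFilter F ∧ ∀ x : A, rimp (negl (negr x)) x ∈ F ∧ limp (negr (negl x)) x ∈ F

end BoundedPseudoHoop

open BoundedPseudoHoop

/-!
Write `x⁻ = x → 0`, `x∼ = x ⇝ 0` and `d x = x⁻∼`; an element is dense iff `x⁻ = 0`, and in a good
pseudo-hoop iff `x∼ = 0`. In a good pseudo-hoop `x → y` and `x ⇝ y` are both dense exactly when `x ≤ d y`:
normality follows at once.

If `p` is dense then `c ⊙ (p → c∼) ⊙ p ≤ c ⊙ c∼ = 0` forces `c ⊙ (p → c∼) ≤ p⁻ = 0`, so `p → c∼ ≤ c∼`.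
Goodness gives `x⁻ = (x⁻⁻)∼`, so a dense `x → y` yields `y⁻ ≤ (x → y) → x⁻ ≤ x⁻`, i.e. `x ≤ d y`.
Conversely `(d y → y)∼ ≤ d y ⊙ y∼ = y∼⁻ ⊙ y∼ = 0`, so `d y → y` is dense, and it lies below `x → y`
when `x ≤ d y`. The statements for `⇝` are the mirror images.
-/

namespace PseudoHoop

variable {A : Type u} [PseudoHoop A] {x y z : A}

theorem eq_of_rimp_eq_one (hxy : rimp x y = 1) (hyx : rimp y x = 1) : x = y := by
  simpa only [hxy, hyx, one_mul'] using div₁ x y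

theorem one_rimp_rimp (x y : A) : rimp 1 (rimp x y) = rimp x y := by
  rw [← mul_rimp, one_mul']

theorem rimp_one_rimp_one (x : A) : rimp (rimp 1 x) 1 = 1 := by
  have h := div₁ x 1
  rw [mul_one'] at h
  rw [← h, mul_rimp, rimp_self]

theorem one_rimp (x : A) : rimp 1 x = x := by
  refine eq_of_rimp_eq_one ?_ ?_
  · have h := div₁ x 1
    rw [mul_one'] at h
    rw [← h, mul_rimp, rimp_self, ← one_rimp_rimp x 1, rimp_one_rimp_one]
  · rw [← mul_rimp, mul_one', rimp_self]

theorem rimp_one (x : A) : rimp x 1 = 1 := by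
  simpa only [one_rimp] using rimp_one_rimp_one x

instance : PartialOrder A where
  le := ple
  le_refl := rimp_self
  le_trans x y z hxy hyz := by
    have h : x = rimp y x * y := by rw [← div₁, show rimp x y = 1 from hxy, one_mul']
    change rimp x z = 1
    rw [h, mul_rimp, show rimp y z = 1 from hyz, rimp_one]
  le_antisymm _ _ := eq_of_rimp_eq_one

theorem le_iff_rimp_eq_one : x ≤ y ↔ rimp x y = 1 := Iff.rfl

theorem one_limp (x : A) : limp 1 x = x := by
  simpa only [mul_one', one_mul', one_rimp] using (div₂ 1 x).symm

theorem limp_one (x : A) : limp x 1 = 1 := by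
  have h := div₃ x 1
  rw [one_mul', one_limp] at h
  simpa only [h, limp_self] using mul_limp x (limp x 1) 1

theorem le_iff_limp_eq_one : x ≤ y ↔ limp x y = 1 := by
  rw [le_iff_rimp_eq_one]
  constructor
  · intro h
    have hx : x = y * limp y x := by rw [← div₃, ← div₂, h, one_mul']
    rw [← limp_self y, hx, mul_limp, limp_self, limp_one]
  · intro h
    have hx : x = rimp y x * y := by rw [← div₁, div₂, h, mul_one']
    rw [← rimp_self y, hx, mul_rimp, rimp_self, rimp_one]

theorem mul_le_iff_le_rimp : x * y ≤ z ↔ x ≤ rimp y z := by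
  rw [le_iff_rimp_eq_one, le_iff_rimp_eq_one, mul_rimp]

theorem mul_le_iff_le_limp : x * y ≤ z ↔ y ≤ limp x z := by
  rw [le_iff_limp_eq_one, le_iff_limp_eq_one, mul_limp]

theorem rimp_mul_le (x y : A) : rimp x y * x ≤ y :=
  mul_le_iff_le_rimp.2 le_rfl

theorem mul_limp_le (x y : A) : x * limp x y ≤ y :=
  mul_le_iff_le_limp.2 le_rfl

theorem mul_le_mul_left (z : A) (h : x ≤ y) : z * x ≤ z * y :=
  mul_le_iff_le_limp.2 (h.trans (mul_le_iff_le_limp.1 le_rfl))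

theorem mul_le_mul_right (z : A) (h : x ≤ y) : x * z ≤ y * z :=
  mul_le_iff_le_rimp.2 (h.trans (mul_le_iff_le_rimp.1 le_rfl))

theorem rimp_le_rimp_of_le (z : A) (h : x ≤ y) : rimp y z ≤ rimp x z :=
  mul_le_iff_le_rimp.1 ((mul_le_mul_left _ h).trans (rimp_mul_le y z))

theorem limp_le_limp_of_le (z : A) (h : x ≤ y) : limp y z ≤ limp x z :=
  mul_le_iff_le_limp.1 ((mul_le_mul_right _ h).trans (mul_limp_le y z))

theorem rimp_mul_of_le (h : x ≤ y) : rimp y x * y = x := by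
  rw [← div₁, le_iff_rimp_eq_one.1 h, one_mul']

theorem mul_limp_of_le (h : x ≤ y) : y * limp y x = x := by
  rw [← div₃, le_iff_limp_eq_one.1 h, mul_one']

protected theorem mul_assoc (x y z : A) : x * y * z = x * (y * z) := by
  have h : ∀ w : A, rimp (x * y * z) w = rimp (x * (y * z)) w := fun w => by
    simp only [mul_rimp]
  exact le_antisymm (by rw [le_iff_rimp_eq_one, h, rimp_self])
    (by rw [le_iff_rimp_eq_one, ← h, rimp_self])

end PseudoHoop

namespace BoundedPseudoHoop

variable {A : Type u} [BoundedPseudoHoop A] {x y : A}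

theorem eq_zero_of_le_zero (h : x ≤ 0) : x = 0 :=
  le_antisymm h (zero_le x)

theorem negr_mul_self (x : A) : negr x * x = 0 := by
  simpa only [negr, zero_le, one_mul'] using div₁ x 0

theorem mul_negl_self (x : A) : x * negl x = 0 := by
  simpa only [negl, le_iff_limp_eq_one.1 (zero_le x), mul_one'] using div₃ x 0

theorem le_negl_negr (x : A) : x ≤ negl (negr x) :=
  mul_le_iff_le_limp.1 (negr_mul_self x).le

theorem le_negr_negl (x : A) : x ≤ negr (negl x) :=
  mul_le_iff_le_rimp.1 (mul_negl_self x).le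

theorem negr_negl_negr (x : A) : negr (negl (negr x)) = negr x :=
  le_antisymm (rimp_le_rimp_of_le 0 (le_negl_negr x)) (le_negr_negl (negr x))

theorem negl_negr_negl (x : A) : negl (negr (negl x)) = negl x :=
  le_antisymm (limp_le_limp_of_le 0 (le_negr_negl x)) (le_negl_negr (negl x))

theorem mem_den_iff : x ∈ Den A ↔ negr x = 0 :=
  le_iff_limp_eq_one.symm.trans ⟨eq_zero_of_le_zero, fun h => h.le⟩

theorem mem_den_iff_negl (hg : IsGood A) : x ∈ Den A ↔ negl x = 0 := by
  change negl (negr x) = 1 ↔ _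
  rw [hg x]
  exact ⟨eq_zero_of_le_zero, fun h => h.le⟩

theorem isFilter_den : IsFilter (Den A) where
  nonempty := ⟨1, mem_den_iff.2 (one_rimp 0)⟩
  mul_mem hx hy := by
    rw [mem_den_iff] at *
    rw [negr, mul_rimp, ← negr, hy, ← negr, hx]
  upward hx hxy := mem_den_iff.2 <|
    eq_zero_of_le_zero ((rimp_le_rimp_of_le 0 hxy).trans (mem_den_iff.1 hx).le)

theorem negl_negr_negr (hg : IsGood A) (x : A) : negl (negr (negr x)) = negr x := by
  rw [hg, negr_negl_negr]

theorem negr_negl_negl (hg : IsGood A) (x : A) : negr (negl (negl x)) = negl x := by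
  rw [← hg, negl_negr_negl]

theorem rimp_negl_le_of_mem_den {p : A} (hp : p ∈ Den A) (c : A) : rimp p (negl c) ≤ negl c := by
  refine mul_le_iff_le_limp.1 (eq_zero_of_le_zero ?_).le
  refine (mem_den_iff.1 hp) ▸ mul_le_iff_le_rimp.1 ?_
  rw [PseudoHoop.mul_assoc, ← mul_negl_self c]
  exact mul_le_mul_left c (rimp_mul_le p (negl c))

theorem limp_negr_le_of_negl_eq_zero {p : A} (hp : negl p = 0) (c : A) :
    limp p (negr c) ≤ negr c := by
  refine mul_le_iff_le_rimp.1 (eq_zero_of_le_zero ?_).le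
  refine hp ▸ mul_le_iff_le_limp.1 ?_
  rw [← PseudoHoop.mul_assoc, ← negr_mul_self c]
  exact mul_le_mul_right c (mul_limp_le p (negr c))

theorem negl_rimp_negl_negr_le (x : A) :
    negl (rimp (negl (negr x)) x) ≤ negl (negr x) * negl x := by
  set d := negl (negr x)
  set c := rimp d x
  have hwd : negl c ≤ d :=
    limp_le_limp_of_le 0 (mul_le_iff_le_rimp.1 ((mul_negl_self (negr x)).trans_le (zero_le x)))
  have hcd : c * d = x := rimp_mul_of_le (le_negl_negr x)
  have hx : x * limp d (negl c) = 0 := by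
    rw [← hcd, PseudoHoop.mul_assoc, mul_limp_of_le hwd, mul_negl_self]
  calc negl c = d * limp d (negl c) := (mul_limp_of_le hwd).symm
    _ ≤ d * negl x := mul_le_mul_left d (mul_le_iff_le_limp.1 hx.le)

theorem negr_limp_negr_negl_le (x : A) :
    negr (limp (negr (negl x)) x) ≤ negr x * negr (negl x) := by
  set d := negr (negl x)
  set c := limp d x
  have hwd : negr c ≤ d :=
    rimp_le_rimp_of_le 0 (mul_le_iff_le_limp.1 ((negr_mul_self (negl x)).trans_le (zero_le x)))
  have hdc : d * c = x := mul_limp_of_le (le_negr_negl x)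
  have hx : rimp d (negr c) * x = 0 := by
    rw [← hdc, ← PseudoHoop.mul_assoc, rimp_mul_of_le hwd, negr_mul_self]
  calc negr c = rimp d (negr c) * d := (rimp_mul_of_le hwd).symm
    _ ≤ negr x * d := mul_le_mul_right d (mul_le_iff_le_rimp.1 hx.le)

theorem rimp_negl_negr_mem_den (hg : IsGood A) (x : A) : rimp (negl (negr x)) x ∈ Den A :=
  (mem_den_iff_negl hg).2 <| eq_zero_of_le_zero <|
    (negl_rimp_negl_negr_le x).trans (by rw [hg x, negr_mul_self])

theorem limp_negr_negl_mem_den (hg : IsGood A) (x : A) : limp (negr (negl x)) x ∈ Den A :=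
  mem_den_iff.2 <| eq_zero_of_le_zero <|
    (negr_limp_negr_negl_le x).trans (by rw [← hg x, mul_negl_self])

theorem rimp_mem_den_iff (hg : IsGood A) : rimp x y ∈ Den A ↔ x ≤ negl (negr y) := by
  constructor
  · intro h
    have hy : negr y ≤ rimp (rimp x y) (negr x) := by
      refine mul_le_iff_le_rimp.1 (mul_le_iff_le_rimp.1 ?_)
      rw [PseudoHoop.mul_assoc]
      exact (mul_le_mul_left _ (rimp_mul_le x y)).trans (negr_mul_self y).le
    have hx : rimp (rimp x y) (negr x) ≤ negr x :=
      negl_negr_negr hg x ▸ rimp_negl_le_of_mem_den h (negr (negr x))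
    exact mul_le_iff_le_limp.1 (mul_le_iff_le_rimp.2 (hy.trans hx))
  · intro hx
    exact isFilter_den.upward (rimp_negl_negr_mem_den hg y) <|
      mul_le_iff_le_rimp.1 ((mul_le_mul_left _ hx).trans (rimp_mul_le _ y))

theorem limp_mem_den_iff (hg : IsGood A) : limp x y ∈ Den A ↔ x ≤ negr (negl y) := by
  constructor
  · intro h
    have hy : negl y ≤ limp (limp x y) (negl x) := by
      refine mul_le_iff_le_limp.1 (mul_le_iff_le_limp.1 ?_)
      rw [← PseudoHoop.mul_assoc]
      exact (mul_le_mul_right _ (mul_limp_le x y)).trans (mul_negl_self y).le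
    have hx : limp (limp x y) (negl x) ≤ negl x :=
      negr_negl_negl hg x ▸ limp_negr_le_of_negl_eq_zero ((mem_den_iff_negl hg).1 h) (negl (negl x))
    exact mul_le_iff_le_rimp.1 (mul_le_iff_le_limp.2 (hy.trans hx))
  · intro hx
    exact isFilter_den.upward (limp_negr_negl_mem_den hg y) <|
      mul_le_iff_le_limp.1 ((mul_le_mul_right _ hx).trans (mul_limp_le _ y))

end BoundedPseudoHoop

theorem stmt9 {A : Type u} [BoundedPseudoHoop A] (hg : IsGood A) :
    IsNormalFilter (Den A) ∧ IsInvolutiveFilter (Den A) := by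
  refine ⟨⟨isFilter_den, fun x y => ?_⟩, isFilter_den,
    fun x => ⟨rimp_negl_negr_mem_den hg x, limp_negr_negl_mem_den hg x⟩⟩
  rw [rimp_mem_den_iff hg, limp_mem_den_iff hg, hg y]
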